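/- Let n ≥ 2k, let q be a prime power, and let S be a nonempty proper subset of {0,1,...,k-1} with s := min(S). Then the diameter of the generalized Grassmann graph J_{q,S}(n,k) equals 2 if s = 0, and equals ⌈k/(k-s)⌉ if s ≠ 0. -/

import Mathlib

open Finset

namespace ZFPaper

variable {V : Type*}

/-- Zero forcing propagation: `Forces G B v` means `v` eventually gets colored black
starting from the initially black set `B`. -/
inductive Forces (G : SimpleGraph V) (B : Set V) : V → Prop
  | init (v : V) : v ∈ B → Forces G B v
  | force (u v : V) : G.Adj u v → Forces G B u →
      (∀ w, G.Adj u w → w ≠ v → Forces G B w) → Forces G B v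

/-- `B` is a zero forcing set of `G`. -/
def IsZeroForcingSet (G : SimpleGraph V) (B : Set V) : Prop := ∀ v, Forces G B v

/-- The zero forcing number `Z(G)`. -/
noncomputable def zeroForcingNumber (G : SimpleGraph V) : ℕ :=
  sInf {m | ∃ B : Finset V, B.card = m ∧ IsZeroForcingSet G ↑B}

/-- The total zero forcing number `Z_t(G)`. -/
noncomputable def totalZeroForcingNumber (G : SimpleGraph V) : ℕ :=
  sInf {m | ∃ B : Finset V, B.card = m ∧ IsZeroForcingSet G ↑B ∧
    ∀ v ∈ B, ∃ u ∈ B, G.Adj v u}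

/-- The connected zero forcing number `Z_c(G)`. -/
noncomputable def connectedZeroForcingNumber (G : SimpleGraph V) : ℕ :=
  sInf {m | ∃ B : Finset V, B.card = m ∧ IsZeroForcingSet G ↑B ∧
    (G.induce (↑B : Set V)).Connected}

/-- The closed neighborhood of a vertex. -/
def closedNbhd (G : SimpleGraph V) (v : V) : Set V := G.neighborSet v ∪ {v}

/-- A Z-Grundy dominating sequence: each vertex has an open neighbor not yet dominated,
and at the end every vertex is dominated. -/
def IsZGrundySeq (G : SimpleGraph V) (l : List V) : Prop :=
  (∀ i : Fin l.length,
    ((G.neighborSet (l.get i)) \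
      (⋃ j : Fin l.length, ⋃ _ : (j : ℕ) < (i : ℕ), closedNbhd G (l.get j))).Nonempty) ∧
  ∀ v : V, ∃ i : Fin l.length, v ∈ closedNbhd G (l.get i)

/-- The Z-Grundy domination number `γ_gr^Z(G)`. -/
noncomputable def zGrundyNumber (G : SimpleGraph V) : ℕ :=
  sSup {m | ∃ l : List V, IsZGrundySeq G l ∧ l.length = m}

/-- The generalized Johnson graph `J_S(n,k)`. -/
def genJohnson (n k : ℕ) (S : Finset ℕ) :
    SimpleGraph {A : Finset (Fin n) // A.card = k} where
  Adj v w := v ≠ w ∧ (v.1 ∩ w.1).card ∈ S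
  symm := ⟨by
    rintro v w ⟨h1, h2⟩
    exact ⟨h1.symm, by rwa [Finset.inter_comm]⟩⟩
  loopless := ⟨by rintro v ⟨h1, -⟩; exact h1 rfl⟩

/-- The generalized Grassmann graph `J_{q,S}(n,k)` over a finite field `F` of order `q`. -/
def genGrassmann (F : Type*) [Field F] (n k : ℕ) (S : Finset ℕ) :
    SimpleGraph {W : Submodule F (Fin n → F) // Module.finrank F W = k} where
  Adj v w := v ≠ w ∧ Module.finrank F ↥(v.1 ⊓ w.1) ∈ S
  symm := ⟨by
    rintro v w ⟨h1, h2⟩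
    exact ⟨h1.symm, by rwa [inf_comm w.1 v.1]⟩⟩
  loopless := ⟨by rintro v ⟨h1, -⟩; exact h1 rfl⟩

/-- The Hamming graph `H(n,q)`. -/
def hammingGraph (n q : ℕ) : SimpleGraph (Fin n → Fin q) where
  Adj x y := hammingDist x y = 1
  symm := ⟨fun x y h => by show hammingDist y x = 1; rw [hammingDist_comm]; exact h⟩
  loopless := ⟨fun x h => by
    have h' : hammingDist x x = 1 := h
    simp only [hammingDist_self] at h'; exact absurd h' (by norm_num)⟩



section GGLinAlg

open Submodule Module


variable {F : Type*} [Field F] {M : Type*} [AddCommGroup M] [Module F M]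
  [FiniteDimensional F M]

lemma ne_top_of_finrank_lt {A : Submodule F M} (h : finrank F A < finrank F M) : A ≠ ⊤ := by
  intro rfl_eq
  rw [rfl_eq, finrank_top] at h
  exact lt_irrefl _ h

omit [FiniteDimensional F M] in
lemma exists_notMem_of_ne_top {A : Submodule F M} (h : A ≠ ⊤) : ∃ v, v ∉ A := by
  by_contra hc
  push_neg at hc
  exact h (Submodule.eq_top_iff'.mpr hc)

omit [FiniteDimensional F M] in
lemma exists_notMem_pair {A B : Submodule F M} (hA : A ≠ ⊤) (hB : B ≠ ⊤) :
    ∃ v, v ∉ A ∧ v ∉ B := by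
  obtain ⟨a, ha⟩ := exists_notMem_of_ne_top hA
  obtain ⟨b, hb⟩ := exists_notMem_of_ne_top hB
  by_cases hab : a ∈ B
  · by_cases hba : b ∈ A
    · refine ⟨a + b, fun h => ?_, fun h => ?_⟩
      · exact ha (by simpa using A.sub_mem h hba)
      · exact hb (by simpa using B.sub_mem h hab)
    · exact ⟨b, hba, hb⟩
  · exact ⟨a, ha, hab⟩

lemma finrank_sup_span_singleton {B : Submodule F M} {v : M} (hv : v ∉ B) :
    finrank F ↥(B ⊔ F ∙ v) = finrank F B + 1 := by
  have hv0 : v ≠ 0 := fun h => hv (h ▸ B.zero_mem)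
  have hinf : B ⊓ (F ∙ v) = ⊥ := by
    rw [eq_bot_iff]
    rintro x ⟨hxB, hxv⟩
    obtain ⟨c, rfl⟩ := Submodule.mem_span_singleton.mp hxv
    rcases eq_or_ne c 0 with rfl | hc
    · simp
    · exact absurd (by simpa [hc] using B.smul_mem c⁻¹ hxB) hv
  have := Submodule.finrank_sup_add_finrank_inf_eq B (F ∙ v)
  rw [hinf, finrank_bot, finrank_span_singleton hv0] at this
  omega

/-- Grow `B` by `m` vectors, each outside both `V ⊔ B` and `W ⊔ B`. -/
lemma lemG (V W : Submodule F M) : ∀ (m : ℕ) (B : Submodule F M),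
    finrank F ↥(V ⊔ B) + m ≤ finrank F M → finrank F ↥(W ⊔ B) + m ≤ finrank F M →
    ∃ B' : Submodule F M, B ≤ B' ∧ finrank F B' = finrank F B + m ∧
      finrank F ↥(V ⊔ B') = finrank F ↥(V ⊔ B) + m ∧
      finrank F ↥(W ⊔ B') = finrank F ↥(W ⊔ B) + m := by
  intro m
  induction m with
  | zero => exact fun B _ _ => ⟨B, le_rfl, by simp⟩
  | succ m ih =>
    intro B hV hW
    obtain ⟨v, hvV, hvW⟩ := exists_notMem_pair
      (ne_top_of_finrank_lt (show finrank F ↥(V ⊔ B) < finrank F M by omega))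
      (ne_top_of_finrank_lt (show finrank F ↥(W ⊔ B) < finrank F M by omega))
    have hvB : v ∉ B := fun h => hvV (le_sup_right (a := V) h)
    have hB1 : finrank F ↥(B ⊔ F ∙ v) = finrank F B + 1 := finrank_sup_span_singleton hvB
    have hV1 : finrank F ↥(V ⊔ (B ⊔ F ∙ v)) = finrank F ↥(V ⊔ B) + 1 := by
      rw [← sup_assoc]; exact finrank_sup_span_singleton hvV
    have hW1 : finrank F ↥(W ⊔ (B ⊔ F ∙ v)) = finrank F ↥(W ⊔ B) + 1 := by
      rw [← sup_assoc]; exact finrank_sup_span_singleton hvW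
    obtain ⟨B', hle, h1, h2, h3⟩ := ih (B ⊔ F ∙ v) (by omega) (by omega)
    exact ⟨B', le_trans le_sup_left hle, by omega, by omega, by omega⟩

/-- Grow `B` by `m` vectors inside `V`, each outside `W ⊔ B`. -/
lemma lemY (V W : Submodule F M) : ∀ (m : ℕ) (B : Submodule F M), B ≤ V ⊔ W →
    finrank F ↥(W ⊔ B) + m ≤ finrank F ↥(V ⊔ W) →
    ∃ B' : Submodule F M, B ≤ B' ∧ B' ≤ V ⊔ W ∧ finrank F B' = finrank F B + m ∧
      V ⊔ B' = V ⊔ B ∧ finrank F ↥(W ⊔ B') = finrank F ↥(W ⊔ B) + m := by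
  intro m
  induction m with
  | zero => exact fun B hB _ => ⟨B, le_rfl, hB, by simp⟩
  | succ m ih =>
    intro B hBVW hdim
    have : ∃ v ∈ V, v ∉ W ⊔ B := by
      by_contra h
      push_neg at h
      have hle : V ⊔ W ≤ W ⊔ B := sup_le (fun x hx => h x hx) le_sup_left
      have := Submodule.finrank_mono hle
      omega
    obtain ⟨v, hvV, hvWB⟩ := this
    have hvB : v ∉ B := fun h => hvWB (le_sup_right (a := W) h)
    have hB1 : finrank F ↥(B ⊔ F ∙ v) = finrank F B + 1 := finrank_sup_span_singleton hvB
    have hW1 : finrank F ↥(W ⊔ (B ⊔ F ∙ v)) = finrank F ↥(W ⊔ B) + 1 := by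
      rw [← sup_assoc]; exact finrank_sup_span_singleton hvWB
    have hsubV : (F ∙ v) ≤ V := (Submodule.span_singleton_le_iff_mem v V).mpr hvV
    have hVeq : V ⊔ (B ⊔ F ∙ v) = V ⊔ B := by
      rw [sup_comm B, ← sup_assoc, sup_eq_left.mpr hsubV]
    obtain ⟨B', hle, hle2, h1, h2, h3⟩ := ih (B ⊔ F ∙ v)
      (sup_le hBVW (le_trans hsubV le_sup_left)) (by omega)
    exact ⟨B', le_trans le_sup_left hle, hle2, by omega, by rw [h2, hVeq], by omega⟩

/-- A subspace of prescribed dimension inside `C`. -/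
lemma exists_sub_of_finrank_le (C : Submodule F M) {x : ℕ} (hx : x ≤ finrank F C) :
    ∃ B : Submodule F M, B ≤ C ∧ finrank F B = x := by
  obtain ⟨B', -, hle, h1, -, -⟩ := lemY C ⊥ x ⊥ (by simp)
    (by rw [sup_bot_eq, sup_bot_eq, finrank_bot]; omega)
  refine ⟨B', by rwa [sup_bot_eq] at hle, by rwa [finrank_bot, zero_add] at h1⟩

lemma step_exists (V W : Submodule F M) {k t σ u x : ℕ}
    (hV : finrank F V = k) (hW : finrank F W = k) (ht : finrank F ↥(V ⊓ W) = t)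
    (hn : 2 * k ≤ finrank F M)
    (hxt : x ≤ t) (hxσ : x ≤ σ) (hxu : x ≤ u) (hσk : σ ≤ k) (huk : u ≤ k)
    (h1 : σ + u ≤ k + x) (h2 : t + σ ≤ k + x) (h3 : t + u ≤ k + x) :
    ∃ B : Submodule F M, finrank F B = k ∧ finrank F ↥(B ⊓ V) = σ ∧
      finrank F ↥(B ⊓ W) = u := by
  have htk : t ≤ k := by
    rw [← ht, ← hV]; exact Submodule.finrank_mono inf_le_left
  have hsup : finrank F ↥(V ⊔ W) + t = 2 * k := by
    have := Submodule.finrank_sup_add_finrank_inf_eq V W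
    rw [hV, hW, ht] at this; omega
  -- Phase X
  obtain ⟨B₀, hB₀le, hB₀⟩ := exists_sub_of_finrank_le (V ⊓ W) (show x ≤ finrank F ↥(V ⊓ W) by omega)
  have hB₀V : V ⊔ B₀ = V := sup_eq_left.mpr (le_trans hB₀le inf_le_left)
  have hB₀W : W ⊔ B₀ = W := sup_eq_left.mpr (le_trans hB₀le inf_le_right)
  -- Phase Y : σ - x vectors in V outside W ⊔ B
  obtain ⟨B₁, -, hB₁VW, hB₁rk, hB₁V, hB₁W⟩ := lemY V W (σ - x) B₀
    (le_trans (le_trans hB₀le inf_le_left) le_sup_left)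
    (by rw [hB₀W, hW]; omega)
  rw [hB₀] at hB₁rk
  rw [hB₀W, hW] at hB₁W
  rw [hB₀V] at hB₁V
  -- Phase Z : u - x vectors in W outside V ⊔ B
  obtain ⟨B₂, -, hB₂VW, hB₂rk, hB₂W, hB₂V⟩ := lemY W V (u - x) B₁
    (by rwa [sup_comm])
    (by rw [hB₁V, hV, sup_comm W V]; omega)
  rw [hB₁rk] at hB₂rk
  rw [hB₁V, hV] at hB₂V
  have hB₂W' : finrank F ↥(W ⊔ B₂) = k + (σ - x) := by rw [hB₂W, hB₁W]
  -- Phase R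
  obtain ⟨B₃, -, hB₃rk, hB₃V, hB₃W⟩ := lemG V W (k + x - σ - u) B₂
    (by rw [hB₂V]; omega) (by rw [hB₂W']; omega)
  rw [hB₂rk] at hB₃rk
  rw [hB₂V] at hB₃V
  rw [hB₂W'] at hB₃W
  refine ⟨B₃, by omega, ?_, ?_⟩
  · have h := Submodule.finrank_sup_add_finrank_inf_eq B₃ V
    rw [hV, sup_comm B₃ V] at h
    omega
  · have h := Submodule.finrank_sup_add_finrank_inf_eq B₃ W
    rw [hW, sup_comm B₃ W] at h
    omega


end GGLinAlg

section GGGraph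

open Submodule Module SimpleGraph

variable {F : Type*} [Field F] {n k : ℕ} {S : Finset ℕ}

local notation "Vt" => {W : Submodule F (Fin n → F) // Module.finrank F W = k}

lemma gg_amb : finrank F (Fin n → F) = n := Module.finrank_fin_fun F

lemma gg_ne_of_inf_lt {U W : Vt} (h : finrank F ↥(U.1 ⊓ W.1) < k) : U ≠ W := by
  rintro rfl
  rw [inf_idem, U.2] at h
  omega

lemma gg_inf_le {U W : Vt} : finrank F ↥(U.1 ⊓ W.1) ≤ k :=
  le_trans (Submodule.finrank_mono inf_le_left) (le_of_eq U.2)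

lemma gg_inf_lt_of_ne {U W : Vt} (h : U ≠ W) : finrank F ↥(U.1 ⊓ W.1) < k := by
  rcases lt_or_eq_of_le (gg_inf_le (U := U) (W := W)) with hlt | heq
  · exact hlt
  · exfalso
    have h1 : U.1 ⊓ W.1 = U.1 :=
      Submodule.eq_of_le_of_finrank_le inf_le_left (by rw [heq, U.2])
    have h2 : U.1 ≤ W.1 := by rw [← h1]; exact inf_le_right
    have h3 : U.1 = W.1 :=
      Submodule.eq_of_le_of_finrank_le h2 (by rw [U.2, W.2])
    exact h (Subtype.ext h3)

lemma gg_adj (hsub : S ⊆ Finset.range k) {U W : Vt}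
    (h : finrank F ↥(U.1 ⊓ W.1) ∈ S) : (genGrassmann F n k S).Adj U W :=
  ⟨gg_ne_of_inf_lt (Finset.mem_range.mp (hsub h)), h⟩

lemma gg_walk_lb (hS : S.Nonempty) (hsub : S ⊆ Finset.range k) {U W : Vt}
    (p : (genGrassmann F n k S).Walk U W) :
    k ≤ finrank F ↥(U.1 ⊓ W.1) + (k - S.min' hS) * p.length := by
  induction p with
  | @nil u => rw [inf_idem, u.2]; omega
  | @cons a b c h p ih =>
    obtain ⟨hne, hmem⟩ := id h
    have hs_le : S.min' hS ≤ finrank F ↥(a.1 ⊓ b.1) := S.min'_le _ hmem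
    have hsk : S.min' hS < k := Finset.mem_range.mp (hsub (S.min'_mem hS))
    have hlt : finrank F ↥(a.1 ⊓ b.1) < k := Finset.mem_range.mp (hsub hmem)
    have key := Submodule.finrank_sup_add_finrank_inf_eq (a.1 ⊓ b.1) (b.1 ⊓ c.1)
    have h1 : finrank F ↥((a.1 ⊓ b.1) ⊔ (b.1 ⊓ c.1)) ≤ k :=
      le_trans (Submodule.finrank_mono (sup_le inf_le_right inf_le_left)) (le_of_eq b.2)
    have h2 : finrank F ↥((a.1 ⊓ b.1) ⊓ (b.1 ⊓ c.1)) ≤ finrank F ↥(a.1 ⊓ c.1) :=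
      Submodule.finrank_mono (le_inf (le_trans inf_le_left inf_le_left)
        (le_trans inf_le_right inf_le_right))
    rw [SimpleGraph.Walk.length_cons, Nat.mul_succ]
    omega

lemma gg_step_vtx (hn : 2 * k ≤ n) (U W : Vt) {σ u x : ℕ}
    (hxt : x ≤ finrank F ↥(U.1 ⊓ W.1)) (hxσ : x ≤ σ) (hxu : x ≤ u)
    (hσk : σ ≤ k) (huk : u ≤ k)
    (h1 : σ + u ≤ k + x) (h2 : finrank F ↥(U.1 ⊓ W.1) + σ ≤ k + x)
    (h3 : finrank F ↥(U.1 ⊓ W.1) + u ≤ k + x) :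
    ∃ B : Vt, finrank F ↥(B.1 ⊓ U.1) = σ ∧ finrank F ↥(B.1 ⊓ W.1) = u := by
  obtain ⟨B, hBk, hBU, hBW⟩ := step_exists U.1 W.1 U.2 W.2 rfl
    (by rw [gg_amb]; exact hn) hxt hxσ hxu hσk huk h1 h2 h3
  exact ⟨⟨B, hBk⟩, hBU, hBW⟩

lemma gg_twoStep (hS : S.Nonempty) (hsub : S ⊆ Finset.range k) (hn : 2 * k ≤ n)
    {U W : Vt} (hUW : U ≠ W)
    (h2s : 2 * S.min' hS ≤ k + finrank F ↥(U.1 ⊓ W.1)) :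
    ∃ p : (genGrassmann F n k S).Walk U W, p.length ≤ 2 := by
  have hsS : S.min' hS ∈ S := S.min'_mem hS
  have hsk : S.min' hS < k := Finset.mem_range.mp (hsub hsS)
  have htk : finrank F ↥(U.1 ⊓ W.1) < k := gg_inf_lt_of_ne hUW
  by_cases htS : finrank F ↥(U.1 ⊓ W.1) ∈ S
  · exact ⟨(gg_adj hsub htS).toWalk, by simp⟩
  · set s := S.min' hS
    set t := finrank F ↥(U.1 ⊓ W.1) with htdef
    have hx : ∃ x, x ≤ t ∧ x ≤ s ∧ s + s ≤ k + x ∧ t + s ≤ k + x := by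
      rcases le_total t s with h | h
      · exact ⟨s + s - k, by omega, by omega, by omega, by omega⟩
      · exact ⟨t + s - k, by omega, by omega, by omega, by omega⟩
    obtain ⟨x, hx1, hx2, hx3, hx4⟩ := hx
    obtain ⟨B, hBU, hBW⟩ := gg_step_vtx hn U W (x := x) (σ := s) (u := s)
      hx1 hx2 hx2 (le_of_lt hsk) (le_of_lt hsk) hx3 hx4 hx4
    have e1 : (genGrassmann F n k S).Adj U B := gg_adj hsub (by rw [inf_comm, hBU]; exact hsS)
    have e2 : (genGrassmann F n k S).Adj B W := gg_adj hsub (by rw [hBW]; exact hsS)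
    exact ⟨SimpleGraph.Walk.cons e1 e2.toWalk, by simp⟩

lemma gg_walkAux (hS : S.Nonempty) (hsub : S ⊆ Finset.range k) (hn : 2 * k ≤ n) :
    ∀ (c : ℕ) (U W : Vt), U ≠ W →
      2 * S.min' hS ≤ k + finrank F ↥(U.1 ⊓ W.1) + (k - S.min' hS) * c →
      ∃ p : (genGrassmann F n k S).Walk U W, p.length ≤ 2 + c := by
  intro c
  induction c with
  | zero =>
    intro U W hUW h
    exact gg_twoStep hS hsub hn hUW (by omega)
  | succ c ih =>
    intro U W hUW h
    have hsS : S.min' hS ∈ S := S.min'_mem hS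
    have hsk : S.min' hS < k := Finset.mem_range.mp (hsub hsS)
    set s := S.min' hS
    by_cases hcase : 2 * s ≤ k + finrank F ↥(U.1 ⊓ W.1)
    · obtain ⟨p, hp⟩ := gg_twoStep hS hsub hn hUW hcase
      exact ⟨p, by omega⟩
    · set t := finrank F ↥(U.1 ⊓ W.1) with htdef
      have hts : t < s := by omega
      have htk : t < k := by omega
      obtain ⟨B, hBU, hBW⟩ := gg_step_vtx hn U W (x := t) (σ := s) (u := t + (k - s))
        le_rfl (by omega) (by omega) (by omega) (by omega) (by omega) (by omega) (by omega)
      have hBWlt : finrank F ↥(B.1 ⊓ W.1) < k := by rw [hBW]; omega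
      have hBne : B ≠ W := gg_ne_of_inf_lt hBWlt
      obtain ⟨q, hq⟩ := ih B W hBne (by rw [hBW]; rw [Nat.mul_succ] at h; omega)
      have e1 : (genGrassmann F n k S).Adj U B := gg_adj hsub (by rw [inf_comm, hBU]; exact hsS)
      exact ⟨SimpleGraph.Walk.cons e1 q, by rw [SimpleGraph.Walk.length_cons]; omega⟩

lemma gg_pair (hn : 2 * k ≤ n) {c : ℕ} (hc : c ≤ k) :
    ∃ U W : Vt, finrank F ↥(U.1 ⊓ W.1) = c := by
  obtain ⟨U₀, -, hU₀⟩ := exists_sub_of_finrank_le (⊤ : Submodule F (Fin n → F))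
    (show k ≤ _ by rw [finrank_top, gg_amb]; omega)
  obtain ⟨B, hBk, hBU, -⟩ := step_exists U₀ U₀ hU₀ hU₀ (by rw [inf_idem]; exact hU₀)
    (by rw [gg_amb]; exact hn) (x := c) (σ := c) (u := c)
    hc le_rfl le_rfl hc hc (by omega) (by omega) (by omega)
  exact ⟨⟨B, hBk⟩, ⟨U₀, hU₀⟩, hBU⟩

lemma exists_ceil (k D : ℕ) (hD : 1 ≤ D) (hk : 1 ≤ k) :
    ∃ Mc : ℕ, 1 ≤ Mc ∧ D * (Mc - 1) < k ∧ k ≤ D * Mc := by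
  obtain ⟨q, r, hqr, hr⟩ : ∃ q r, k = D * q + r ∧ r < D :=
    ⟨k / D, k % D, (Nat.div_add_mod k D).symm, Nat.mod_lt _ (by omega)⟩
  rcases Nat.eq_zero_or_pos r with rfl | hrpos
  · have hq1 : 1 ≤ q := by
      rcases Nat.eq_zero_or_pos q with rfl | h
      · simp at hqr; omega
      · exact h
    have h1 : D * (q - 1) + D = D * q := by rw [← Nat.mul_succ]; congr 1; omega
    exact ⟨q, hq1, by omega, by omega⟩
  · have h1 : D * (q + 1) = D * q + D := Nat.mul_succ D q
    exact ⟨q + 1, by omega, by simpa using by omega, by omega⟩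

lemma ceil_char (Mc k D : ℕ) (hD : 1 ≤ D) (hM : 1 ≤ Mc)
    (h1 : D * (Mc - 1) < k) (h2 : k ≤ D * Mc) :
    ⌈(k : ℚ) / (D : ℚ)⌉ = (Mc : ℤ) := by
  have hD0 : (0 : ℚ) < (D : ℚ) := by exact_mod_cast hD
  rw [Int.ceil_eq_iff]
  have h1' : (Mc - 1) * D < k := by rw [Nat.mul_comm]; exact h1
  constructor
  · rw [lt_div_iff₀ hD0]
    have hlt : (((Mc - 1) * D : ℕ) : ℚ) < (k : ℚ) := by exact_mod_cast h1'
    calc (((Mc : ℤ) : ℚ) - 1) * (D : ℚ) = (((Mc - 1) * D : ℕ) : ℚ) := by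
          push_cast [Nat.cast_sub hM]
          ring
      _ < (k : ℚ) := hlt
  · rw [div_le_iff₀ hD0]
    calc (k : ℚ) ≤ ((D * Mc : ℕ) : ℚ) := by exact_mod_cast h2
      _ = ((Mc : ℤ) : ℚ) * D := by push_cast; ring


/-- diameter of generalized Grassmann graphs, n ≥ 2k. -/
theorem genGrassmann_diam (F : Type) [Field F] [Fintype F] (n k : ℕ) (hn : 2 * k ≤ n)
    (S : Finset ℕ) (hS : S.Nonempty) (hsub : S ⊆ Finset.range k) (hne : S ≠ Finset.range k) :
    (S.min' hS = 0 → (genGrassmann F n k S).diam = 2) ∧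
    (S.min' hS ≠ 0 →
      ((genGrassmann F n k S).diam : ℤ) = ⌈(k : ℚ) / ((k : ℚ) - (S.min' hS : ℚ))⌉) := by
  have hsS : S.min' hS ∈ S := S.min'_mem hS
  have hsk : S.min' hS < k := Finset.mem_range.mp (hsub hsS)
  constructor
  · intro hs0
    have hub : ∀ u v : {W : Submodule F (Fin n → F) // Module.finrank F W = k},
        (genGrassmann F n k S).edist u v ≤ ((2 : ℕ) : ℕ∞) := by
      intro u v
      rcases eq_or_ne u v with rfl | huv
      · rw [SimpleGraph.edist_self]; exact zero_le
      · obtain ⟨p, hp⟩ := gg_twoStep hS hsub hn huv (by omega)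
        exact le_trans (SimpleGraph.Walk.edist_le p) (by exact_mod_cast hp)
    obtain ⟨c₀, hc₀r, hc₀S⟩ := Finset.not_subset.mp
      (fun h => hne (Finset.Subset.antisymm hsub h))
    obtain ⟨U₀, W₀, hUW₀⟩ := gg_pair (F := F) (n := n) (k := k) hn
      (le_of_lt (Finset.mem_range.mp hc₀r))
    have hne₀ : U₀ ≠ W₀ := gg_ne_of_inf_lt (by rw [hUW₀]; exact Finset.mem_range.mp hc₀r)
    have hlb : ∀ p : (genGrassmann F n k S).Walk U₀ W₀, 2 ≤ p.length := by
      intro p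
      by_contra hcon
      push_neg at hcon
      have : p.length = 0 ∨ p.length = 1 := by omega
      rcases this with h | h
      · exact hne₀ (SimpleGraph.Walk.eq_of_length_eq_zero h)
      · have hadj := SimpleGraph.Walk.adj_of_length_eq_one h
        rw [genGrassmann] at hadj
        exact hc₀S (hUW₀ ▸ hadj.2)
    have hne_top : (genGrassmann F n k S).edist U₀ W₀ ≠ ⊤ :=
      ne_top_of_le_ne_top (ENat.coe_ne_top 2) (hub U₀ W₀)
    obtain ⟨p, hp⟩ := SimpleGraph.exists_walk_of_edist_ne_top hne_top
    have h2le : ((2 : ℕ) : ℕ∞) ≤ (genGrassmann F n k S).edist U₀ W₀ := by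
      rw [← hp]; exact_mod_cast hlb p
    have hediam : (genGrassmann F n k S).ediam = ((2 : ℕ) : ℕ∞) :=
      le_antisymm (SimpleGraph.ediam_le_of_edist_le hub)
        (le_trans h2le SimpleGraph.edist_le_ediam)
    rw [SimpleGraph.diam, hediam, ENat.toNat_coe]
  · intro hs0
    set s := S.min' hS with hsdef
    have hs1 : 1 ≤ s := Nat.pos_of_ne_zero hs0
    obtain ⟨Mc, hM1, hMlt, hMge⟩ := exists_ceil k (k - s) (by omega) (by omega)
    have hM2 : 2 ≤ Mc := by
      by_contra hcon
      have hle : (k - s) * Mc ≤ (k - s) * 1 := Nat.mul_le_mul_left _ (by omega)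
      rw [Nat.mul_one] at hle
      omega
    have hsplit : (k - s) * (Mc - 2) + (k - s) * 2 = (k - s) * Mc := by
      rw [← Nat.mul_add]; congr 1; omega
    have hub : ∀ u v : {W : Submodule F (Fin n → F) // Module.finrank F W = k},
        (genGrassmann F n k S).edist u v ≤ ((Mc : ℕ) : ℕ∞) := by
      intro u v
      rcases eq_or_ne u v with rfl | huv
      · rw [SimpleGraph.edist_self]; exact zero_le
      · obtain ⟨p, hp⟩ := gg_walkAux hS hsub hn (Mc - 2) u v huv (by rw [← hsdef]; omega)
        exact le_trans (SimpleGraph.Walk.edist_le p)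
          (by exact_mod_cast (by omega : p.length ≤ Mc))
    obtain ⟨U₀, W₀, hUW₀⟩ := gg_pair (F := F) (n := n) (k := k) hn (Nat.zero_le k)
    have hne₀ : U₀ ≠ W₀ := gg_ne_of_inf_lt (by rw [hUW₀]; omega)
    have hlb : ∀ p : (genGrassmann F n k S).Walk U₀ W₀, Mc ≤ p.length := by
      intro p
      have hwl := gg_walk_lb hS hsub p
      rw [hUW₀, ← hsdef] at hwl
      by_contra hcon
      push_neg at hcon
      have h5 : (k - s) * p.length ≤ (k - s) * (Mc - 1) :=
        Nat.mul_le_mul_left _ (by omega)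
      omega
    have hne_top : (genGrassmann F n k S).edist U₀ W₀ ≠ ⊤ :=
      ne_top_of_le_ne_top (ENat.coe_ne_top Mc) (hub U₀ W₀)
    obtain ⟨p, hp⟩ := SimpleGraph.exists_walk_of_edist_ne_top hne_top
    have hMle : ((Mc : ℕ) : ℕ∞) ≤ (genGrassmann F n k S).edist U₀ W₀ := by
      rw [← hp]; exact_mod_cast hlb p
    have hediam : (genGrassmann F n k S).ediam = ((Mc : ℕ) : ℕ∞) :=
      le_antisymm (SimpleGraph.ediam_le_of_edist_le hub)
        (le_trans hMle SimpleGraph.edist_le_ediam)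
    have hdiam : (genGrassmann F n k S).diam = Mc := by
      rw [SimpleGraph.diam, hediam, ENat.toNat_coe]
    rw [hdiam]
    have hcast : (k : ℚ) - (s : ℚ) = ((k - s : ℕ) : ℚ) := by
      push_cast [Nat.cast_sub (le_of_lt hsk)]
      ring
    rw [hcast]
    exact (ceil_char Mc k (k - s) (by omega) (by omega) hMlt hMge).symm


end GGGraph

end ZFPaper
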